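/- For the biochemical oxygen demand model B(t) = θ₀(1 - exp(-θ₁ t)), the map (θ₀, θ₁) ↦ B(t) is injective on (0,∞) × (0,∞) when evaluated at two distinct positive times t₁ ≠ t₂: if θ₀(1-e^{-θ₁ t}) = θ₀'(1-e^{-θ₁' t}) for t ∈ {t₁, t₂} with t₁, t₂ > 0 distinct, then (θ₀,θ₁) = (θ₀',θ₁'). -/

import Mathlib

/-!
Subtracting the two curves gives a function vanishing at `0 < t₁ < t₂`, so by Rolle's theorem
its derivative `θ₀θ₁ e^{-θ₁ s} - θ₀'θ₁' e^{-θ₁' s}` vanishes at two distinct points. Two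
exponentials `a e^{b s}` and `a' e^{b' s}` that agree at two distinct points coincide, which
gives `θ₁ = θ₁'` and `θ₀θ₁ = θ₀'θ₁'`.
-/

open Real Set

/-- The biochemical oxygen demand curve `B(t; θ₀, θ₁)`. -/
noncomputable def bod (θ₀ θ₁ t : ℝ) : ℝ := θ₀ * (1 - exp (-θ₁ * t))

lemma hasDerivAt_bod (θ₀ θ₁ t : ℝ) :
    HasDerivAt (bod θ₀ θ₁) (θ₀ * θ₁ * exp (-θ₁ * t)) t := by
  refine ((((hasDerivAt_id t).const_mul (-θ₁)).exp.const_sub 1).const_mul θ₀).congr_deriv ?_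
  simp only [id, mul_one]
  ring

lemma exists_lt_hasDerivAt_eq_zero_and_eq_zero {f f' : ℝ → ℝ} {a b c : ℝ}
    (hab : a < b) (hbc : b < c) (hf : ∀ x, HasDerivAt f (f' x) x)
    (hfab : f a = f b) (hfbc : f b = f c) :
    ∃ s₁ s₂, s₁ < s₂ ∧ f' s₁ = 0 ∧ f' s₂ = 0 := by
  have hcont : Continuous f := continuous_iff_continuousAt.2 fun x => (hf x).continuousAt
  obtain ⟨s₁, hs₁, hf's₁⟩ :=
    exists_hasDerivAt_eq_zero hab hcont.continuousOn hfab fun x _ => hf x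
  obtain ⟨s₂, hs₂, hf's₂⟩ :=
    exists_hasDerivAt_eq_zero hbc hcont.continuousOn hfbc fun x _ => hf x
  exact ⟨s₁, s₂, hs₁.2.trans hs₂.1, hf's₁, hf's₂⟩

lemma eq_and_eq_of_mul_exp_eq_mul_exp {a a' b b' s₁ s₂ : ℝ} (ha : a ≠ 0) (hs : s₁ ≠ s₂)
    (h₁ : a * exp (b * s₁) = a' * exp (b' * s₁))
    (h₂ : a * exp (b * s₂) = a' * exp (b' * s₂)) :
    a = a' ∧ b = b' := by
  have hratio : ∀ s, a * exp (b * s) = a' * exp (b' * s) → a * exp ((b - b') * s) = a' := by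
    intro s h
    rw [sub_mul, exp_sub, ← mul_div_assoc, h, mul_div_assoc, div_self (exp_ne_zero _), mul_one]
  have hexp : (b - b') * s₁ = (b - b') * s₂ :=
    exp_injective (mul_left_cancel₀ ha ((hratio s₁ h₁).trans (hratio s₂ h₂).symm))
  obtain rfl : b = b' := sub_eq_zero.1 (by_contra fun hb => hs (mul_left_cancel₀ hb hexp))
  simpa using hratio s₁ h₁

theorem stmt17_general (θ₀ θ₁ θ₀' θ₁' t₁ t₂ : ℝ)
    (hθ₀ : 0 < θ₀) (hθ₁ : 0 < θ₁)
    (ht₁ : 0 < t₁) (ht₂ : 0 < t₂) (hne : t₁ ≠ t₂)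
    (h1 : θ₀ * (1 - Real.exp (-θ₁ * t₁)) = θ₀' * (1 - Real.exp (-θ₁' * t₁)))
    (h2 : θ₀ * (1 - Real.exp (-θ₁ * t₂)) = θ₀' * (1 - Real.exp (-θ₁' * t₂))) :
    θ₀ = θ₀' ∧ θ₁ = θ₁' := by
  wlog hlt : t₁ < t₂ generalizing t₁ t₂
  · exact this t₂ t₁ ht₂ ht₁ hne.symm h2 h1 (hne.symm.lt_of_le (not_lt.1 hlt))
  let f t := bod θ₀ θ₁ t - bod θ₀' θ₁' t
  have hf t : HasDerivAt f (θ₀ * θ₁ * exp (-θ₁ * t) - θ₀' * θ₁' * exp (-θ₁' * t)) t :=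
    (hasDerivAt_bod θ₀ θ₁ t).sub (hasDerivAt_bod θ₀' θ₁' t)
  have hf₀ : f 0 = 0 := by simp [f, bod]
  have hf₁ : f t₁ = 0 := sub_eq_zero.2 h1
  have hf₂ : f t₂ = 0 := sub_eq_zero.2 h2
  obtain ⟨s₁, s₂, hs, hs₁, hs₂⟩ :=
    exists_lt_hasDerivAt_eq_zero_and_eq_zero ht₁ hlt hf (hf₀.trans hf₁.symm) (hf₁.trans hf₂.symm)
  obtain ⟨hprod, hrate⟩ := eq_and_eq_of_mul_exp_eq_mul_exp (mul_pos hθ₀ hθ₁).ne' hs.ne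
    (sub_eq_zero.1 hs₁) (sub_eq_zero.1 hs₂)
  obtain rfl : θ₁ = θ₁' := neg_inj.1 hrate
  exact ⟨mul_right_cancel₀ hθ₁.ne' hprod, rfl⟩

/-- Identifiability of the biochemical oxygen demand model
`B(t; θ₀, θ₁) = θ₀(1 - exp(-θ₁ t))` from two distinct positive time points:
if the curves agree at `t₁ ≠ t₂` (both positive) then the parameters agree. -/
theorem stmt17 (θ₀ θ₁ θ₀' θ₁' t₁ t₂ : ℝ)
    (hθ₀ : 0 < θ₀) (hθ₁ : 0 < θ₁) (hθ₀' : 0 < θ₀') (hθ₁' : 0 < θ₁')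
    (ht₁ : 0 < t₁) (ht₂ : 0 < t₂) (hne : t₁ ≠ t₂)
    (h1 : θ₀ * (1 - Real.exp (-θ₁ * t₁)) = θ₀' * (1 - Real.exp (-θ₁' * t₁)))
    (h2 : θ₀ * (1 - Real.exp (-θ₁ * t₂)) = θ₀' * (1 - Real.exp (-θ₁' * t₂))) :
    θ₀ = θ₀' ∧ θ₁ = θ₁' :=
  stmt17_general θ₀ θ₁ θ₀' θ₁' t₁ t₂ hθ₀ hθ₁ ht₁ ht₂ hne h1 h2
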